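/- arXiv:2410.00072 — 2 statements merged into one kernel-verified Lean document; each statement's English description precedes it below -/
import Mathlib

section
/- Let (S,·) be a monoid with identity element e and let ⊙ be an associative binary operation on S satisfying the left e-join law e⊙(x·y) = e⊙(x⊙y) for all x,y ∈ S. Then the map J_e(x) = e⊙x is e-periodic (e⊙(x·e) = e⊙(e·x) = e⊙x for all x) and for all x,y ∈ S the following chain of equalities holds: e⊙(x·y) = e⊙(x⊙y) = (e⊙x)⊙(e⊙y) = e⊙((e⊙x)·y) = e⊙(x·(e⊙y)) = e⊙((e⊙x)⊙y) = e⊙(x⊙(e⊙y)). -/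
/-!
Associativity gives `e ⊙ (a ⊙ b) = (e ⊙ a) ⊙ b`, and combined with the join law also
`e ⊙ (a · b) = (e ⊙ a) ⊙ b`. Taking `a = e` or `b = e` shows that `e ⊙ -` is idempotent and that
`e ⊙ x` absorbs a right factor `e`, hence `(e ⊙ x) ⊙ (e ⊙ y) = (e ⊙ x) ⊙ y`. Every term of the
chain then normalises to `(e ⊙ x) ⊙ y`.
-/

section LeftJoin

variable {S : Type*} [Monoid S] {op : S → S → S}

theorem op_one_mul_eq (hassoc : ∀ x y z : S, op (op x y) z = op x (op y z))
    (hjoin : ∀ x y : S, op 1 (x * y) = op 1 (op x y)) (x y : S) :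
    op 1 (x * y) = op (op 1 x) y :=
  (hjoin x y).trans (hassoc 1 x y).symm

theorem op_one_idem (hjoin : ∀ x y : S, op 1 (x * y) = op 1 (op x y)) (x : S) :
    op 1 (op 1 x) = op 1 x := by
  rw [← hjoin, one_mul]

theorem op_op_one_one (hassoc : ∀ x y z : S, op (op x y) z = op x (op y z))
    (hjoin : ∀ x y : S, op 1 (x * y) = op 1 (op x y)) (x : S) :
    op (op 1 x) 1 = op 1 x := by
  rw [← op_one_mul_eq hassoc hjoin, mul_one]

theorem op_op_one_op_one (hassoc : ∀ x y z : S, op (op x y) z = op x (op y z))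
    (hjoin : ∀ x y : S, op 1 (x * y) = op 1 (op x y)) (x y : S) :
    op (op 1 x) (op 1 y) = op (op 1 x) y := by
  rw [← hassoc, op_op_one_one hassoc hjoin]

end LeftJoin

/-- Let `(S, ·)` be a monoid with identity `e = 1` and `⊙` an associative
operation satisfying the left `e`-join law (a left monoid-`e`-semigroup). Then the map
`J_e x = e ⊙ x` is `e`-periodic, and for all `x, y` the chain of equalities
`e⊙(x·y) = e⊙(x⊙y) = (e⊙x)⊙(e⊙y) = e⊙((e⊙x)·y) = e⊙(x·(e⊙y)) = e⊙((e⊙x)⊙y)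
= e⊙(x⊙(e⊙y))` holds. -/
theorem stmt_11 {S : Type*} [Monoid S] (op : S → S → S)
    (hassoc : ∀ x y z : S, op (op x y) z = op x (op y z))
    (hjoin : ∀ x y : S, op 1 (x * y) = op 1 (op x y)) :
    (∀ x : S, op 1 (x * 1) = op 1 x ∧ op 1 (1 * x) = op 1 x) ∧
    (∀ x y : S,
      op 1 (x * y) = op 1 (op x y) ∧
      op 1 (op x y) = op (op 1 x) (op 1 y) ∧
      op (op 1 x) (op 1 y) = op 1 ((op 1 x) * y) ∧
      op 1 ((op 1 x) * y) = op 1 (x * (op 1 y)) ∧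
      op 1 (x * (op 1 y)) = op 1 (op (op 1 x) y) ∧
      op 1 (op (op 1 x) y) = op 1 (op x (op 1 y))) := by
  have hmul := op_one_mul_eq hassoc hjoin
  have hop : ∀ a b : S, op 1 (op a b) = op (op 1 a) b := fun a b => (hassoc 1 a b).symm
  have hidem := op_one_idem hjoin
  have habsorb := op_op_one_op_one hassoc hjoin
  refine ⟨fun x => ⟨by rw [mul_one], by rw [one_mul]⟩, fun x y =>
    ⟨hjoin x y, ?_, ?_, ?_, ?_, ?_⟩⟩
  · rw [habsorb, hop]
  · rw [habsorb, hmul, hidem]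
  · rw [hmul, hmul, hidem, habsorb]
  · rw [hmul, habsorb, hop, hidem]
  · rw [hop, hidem, hop, habsorb]
end

section
/- Let (G,·,e,⊙) be a left group-e-semigroup, let f(x) := e⊙x, let Ω := f(G) = {e⊙x : x ∈ G}, and let Δ := {x·(e⊙x)⁻¹ : x ∈ G} (inverses taken in the group (G,·)). Then: (i) f is a strong decomposer, i.e. e⊙((x·(e⊙x)⁻¹)·y) = e⊙y and e⊙(x·((e⊙y)⁻¹·y)) = e⊙x for all x,y ∈ G; (ii) Δ is a normal subgroup of (G,·), and Δ = {(e⊙x)⁻¹·x : x ∈ G}; (iii) G factors directly as G = Δ·Ω: every g ∈ G is written as g = (g·(e⊙g)⁻¹)·(e⊙g) with g·(e⊙g)⁻¹ ∈ Δ and e⊙g ∈ Ω, and this representation is unique, i.e. if g = d·w with d ∈ Δ and w ∈ Ω then w = e⊙g and d = g·(e⊙g)⁻¹. In other words, f is the right projection P_Ω with respect to the factorization G = Δ·Ω. -/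
/-!
The map `f x = e ⊙ x` is a semigroup homomorphism `(G, ·) → (G, ⊙)` which is idempotent, so its
fibres form a congruence `c` on the group `(G, ·)` and `f` picks a representative in each class.
Then `Δ` is the class of `1`, hence a normal subgroup, `x · f(x)⁻¹` and `f(x)⁻¹ · x`
lie in it because `f x` is congruent to `x`, and `g = d · w` with `d ∈ Δ` forces `f g = f w = w`
for `w ∈ f(G)`.
-/

section RepresentativeFunction

variable {G : Type*} [Group G] {c : Con G} {f : G → G}

theorem rel_apply_self (hc : ∀ x y, c x y ↔ f x = f y) (hf : ∀ x, f (f x) = f x) (x : G) :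
    c (f x) x :=
  (hc _ _).2 (hf x)

theorem mul_inv_apply_mem_subgroup (hc : ∀ x y, c x y ↔ f x = f y) (hf : ∀ x, f (f x) = f x)
    (x : G) : x * (f x)⁻¹ ∈ c.subgroup := by
  simpa using c.mul (c.refl x) (c.inv (rel_apply_self hc hf x))

theorem inv_apply_mul_mem_subgroup (hc : ∀ x y, c x y ↔ f x = f y) (hf : ∀ x, f (f x) = f x)
    (x : G) : (f x)⁻¹ * x ∈ c.subgroup := by
  simpa using c.mul (c.inv (rel_apply_self hc hf x)) (c.refl x)

theorem apply_mul_of_mem_subgroup (hc : ∀ x y, c x y ↔ f x = f y) {d : G}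
    (hd : d ∈ c.subgroup) (y : G) : f (d * y) = f y :=
  (hc _ _).1 (by simpa using c.mul hd (c.refl y))

theorem apply_mul_of_mem_subgroup_right (hc : ∀ x y, c x y ↔ f x = f y) {d : G}
    (hd : d ∈ c.subgroup) (x : G) : f (x * d) = f x :=
  (hc _ _).1 (by simpa using c.mul (c.refl x) hd)

theorem setOf_mul_inv_apply_eq_subgroup (hc : ∀ x y, c x y ↔ f x = f y)
    (hf : ∀ x, f (f x) = f x) :
    {d : G | ∃ x, d = x * (f x)⁻¹} = c.subgroup := by
  ext d
  refine ⟨fun ⟨x, hx⟩ ↦ hx ▸ mul_inv_apply_mem_subgroup hc hf x, fun hd ↦ ⟨d * f 1, ?_⟩⟩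
  have h : f (d * f 1) = f 1 := by
    rw [apply_mul_of_mem_subgroup hc hd, hf]
  rw [h, mul_inv_cancel_right]

theorem setOf_inv_apply_mul_eq_subgroup (hc : ∀ x y, c x y ↔ f x = f y)
    (hf : ∀ x, f (f x) = f x) :
    {d : G | ∃ x, d = (f x)⁻¹ * x} = c.subgroup := by
  ext d
  refine ⟨fun ⟨x, hx⟩ ↦ hx ▸ inv_apply_mul_mem_subgroup hc hf x, fun hd ↦ ⟨f 1 * d, ?_⟩⟩
  have h : f (f 1 * d) = f 1 := by
    rw [apply_mul_of_mem_subgroup_right hc hd, hf]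
  rw [h, inv_mul_cancel_left]

theorem eq_apply_of_eq_mul (hc : ∀ x y, c x y ↔ f x = f y) (hf : ∀ x, f (f x) = f x)
    {d w g : G} (hd : d ∈ c.subgroup) (hw : w ∈ Set.range f) (hg : g = d * w) : w = f g := by
  obtain ⟨x, rfl⟩ := hw
  rw [hg, apply_mul_of_mem_subgroup hc hd, hf]

end RepresentativeFunction

section LeftJoin

variable {G : Type*} [Group G] {op : G → G → G}

theorem op_one_op_one (hjoin : ∀ x y : G, op 1 (x * y) = op 1 (op x y)) (x : G) :
    op 1 (op 1 x) = op 1 x := by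
  rw [← hjoin, one_mul]

theorem op_one_mul (hassoc : ∀ x y z : G, op (op x y) z = op x (op y z))
    (hjoin : ∀ x y : G, op 1 (x * y) = op 1 (op x y)) (x y : G) :
    op 1 (x * y) = op (op 1 x) (op 1 y) := by
  rw [← hassoc, hassoc 1 x 1, ← hjoin, mul_one, hassoc, ← hjoin]

variable (op) in
def joinCon (hassoc : ∀ x y z : G, op (op x y) z = op x (op y z))
    (hjoin : ∀ x y : G, op 1 (x * y) = op 1 (op x y)) : Con G where
  r x y := op 1 x = op 1 y
  iseqv := ⟨fun _ ↦ rfl, Eq.symm, Eq.trans⟩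
  mul' hx hy := by simp only [op_one_mul hassoc hjoin, hx, hy]

end LeftJoin

/-- Let `(G, ·, e, ⊙)` be a left group-`e`-semigroup (group identity
`e = 1`), let `f x := e ⊙ x`, `Ω := f(G)` and `Δ := {x · (e ⊙ x)⁻¹ : x ∈ G}`. Then:
(i) `f` is a strong decomposer;
(ii) `Δ` is a normal subgroup of `(G, ·)` and `Δ = {(e ⊙ x)⁻¹ · x : x ∈ G}`;
(iii) `G = Δ · Ω` is a direct factorization: every `g` equals
`(g · (e ⊙ g)⁻¹) · (e ⊙ g)` with the two factors in `Δ` and `Ω` respectively, and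
this representation is unique. Thus `f` is the right projection `P_Ω`. -/
theorem stmt_12 {G : Type*} [Group G] (op : G → G → G)
    (hassoc : ∀ x y z : G, op (op x y) z = op x (op y z))
    (hjoin : ∀ x y : G, op 1 (x * y) = op 1 (op x y)) :
    (∀ x y : G, op 1 ((x * (op 1 x)⁻¹) * y) = op 1 y ∧
      op 1 (x * ((op 1 y)⁻¹ * y)) = op 1 x) ∧
    ((∃ N : Subgroup G, N.Normal ∧
        (N : Set G) = {d : G | ∃ x : G, d = x * (op 1 x)⁻¹}) ∧
      {d : G | ∃ x : G, d = x * (op 1 x)⁻¹} =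
        {d : G | ∃ x : G, d = (op 1 x)⁻¹ * x}) ∧
    (∀ g : G,
      g * (op 1 g)⁻¹ ∈ {d : G | ∃ x : G, d = x * (op 1 x)⁻¹} ∧
      op 1 g ∈ Set.range (op 1) ∧
      g = (g * (op 1 g)⁻¹) * op 1 g ∧
      ∀ d ∈ {d : G | ∃ x : G, d = x * (op 1 x)⁻¹}, ∀ w ∈ Set.range (op 1),
        g = d * w → w = op 1 g ∧ d = g * (op 1 g)⁻¹) := by
  have hc : ∀ x y, joinCon op hassoc hjoin x y ↔ op 1 x = op 1 y := fun _ _ ↦ Iff.rfl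
  have hf := op_one_op_one hjoin
  have hΔ := setOf_mul_inv_apply_eq_subgroup hc hf
  refine ⟨fun x y ↦ ⟨?_, ?_⟩, ⟨⟨_, inferInstance, hΔ.symm⟩, ?_⟩, fun g ↦ ?_⟩
  · exact apply_mul_of_mem_subgroup hc (mul_inv_apply_mem_subgroup hc hf x) y
  · exact apply_mul_of_mem_subgroup_right hc (inv_apply_mul_mem_subgroup hc hf y) x
  · rw [hΔ, setOf_inv_apply_mul_eq_subgroup hc hf]
  refine ⟨⟨g, rfl⟩, ⟨g, rfl⟩, (inv_mul_cancel_right g _).symm, fun d hd w hw hg ↦ ?_⟩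
  have hw_eq := eq_apply_of_eq_mul hc hf (hΔ.subset hd) hw hg
  exact ⟨hw_eq, eq_mul_inv_of_mul_eq (hw_eq ▸ hg.symm)⟩
end
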